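/- Let E = ℓ∞(ℕ), let S be the right shift on E, and set T_n = S^n for n ≥ 1. Then the set {T_n : n ≥ 1} is not order bounded in the order bounded operators on E, although for each x ∈ E the set {T_n x : n ≥ 1} is order bounded in E. -/

import Mathlib

/-!
Every orbit of the shift lies in the order interval `[-‖x‖·1, ‖x‖·1]`. Suppose an operator `U`
dominated every `S ^ n` on the positive cone. Then `U ≥ S ≥ 0` is positive, and for `j < k`,
`(U e_j) k ≥ (S ^ (k - j) e_j) k = 1`. Since `∑_{j < m} e_j ≤ 1`, positivity gives
`(U 1) m ≥ ∑_{j < m} (U e_j) m ≥ m` for every `m`, so `U 1` is not a bounded sequence.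
-/

variable (E : Type*) [AddCommGroup E] [Lattice E] [Module ℝ E]
  [CovariantClass E E (· + ·) (· ≤ ·)] [PosSMulMono ℝ E]

/-- The order on order bounded operators: `A ≤ B` iff `A x ≤ B x` for all `x ≥ 0`. -/
def opLE (A B : E →ₗ[ℝ] E) : Prop := ∀ x : E, 0 ≤ x → A x ≤ B x

/-- An operator is order bounded when it maps order bounded sets to order bounded sets. -/
def IsOrderBoundedOp (T : E →ₗ[ℝ] E) : Prop :=
  ∀ a b : E, ∃ c d : E, ∀ x : E, a ≤ x → x ≤ b → c ≤ T x ∧ T x ≤ d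

/-- Band preserving: `T x` lies in the band generated by `x`; equivalently `T x ⊥ y`
whenever `x ⊥ y`. -/
def IsBandPreserving (T : E →ₗ[ℝ] E) : Prop :=
  ∀ x y : E, |x| ⊓ |y| = 0 → |T x| ⊓ |y| = 0

/-- An orthomorphism is an order bounded band preserving linear operator. -/
def IsOrthomorphism (T : E →ₗ[ℝ] E) : Prop :=
  IsOrderBoundedOp E T ∧ IsBandPreserving E T

/-- Membership in the band generated by a set `S` (in an Archimedean vector lattice this is
the double disjoint complement of `S`). -/
def memBandGen (S : Set E) (w : E) : Prop :=
  ∀ u : E, (∀ s ∈ S, |u| ⊓ |s| = 0) → |u| ⊓ |w| = 0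

/-- `P` is the band projection onto the band `B`: it maps into `B` and `x - P x` is
disjoint from `B` for every `x`. -/
def IsBandProjectionOnto (B : Set E) (P : E →ₗ[ℝ] E) : Prop :=
  (∀ x : E, P x ∈ B) ∧ (∀ x : E, ∀ b ∈ B, |x - P x| ⊓ |b| = 0)

/-- Order convergence of a net: there is a downward directed set `D` with infimum `0`
such that the net is eventually dominated by every member of `D`. -/
def OrderConvNet {ι : Type*} [Preorder ι] (y : ι → E) (l : E) : Prop :=
  ∃ D : Set E, D.Nonempty ∧ DirectedOn (· ≥ ·) D ∧ IsGLB D 0 ∧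
    ∀ d ∈ D, ∃ i₀ : ι, ∀ i : ι, i₀ ≤ i → |y i - l| ≤ d

/-- Unbounded order convergence of a net. -/
def UOConvNet {ι : Type*} [Preorder ι] (y : ι → E) (l : E) : Prop :=
  ∀ u : E, 0 ≤ u → OrderConvNet E (fun i => |y i - l| ⊓ u) 0

/-- Order convergence of a net of operators, in the operator order of the order bounded
operators: there is a downward directed set `D` of operators whose infimum among the
order bounded operators is `0`, eventually dominating `|T i - L|`. -/
def OpOrderConvNet {ι : Type*} [Preorder ι] (T : ι → E →ₗ[ℝ] E) (L : E →ₗ[ℝ] E) : Prop :=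
  ∃ D : Set (E →ₗ[ℝ] E), D.Nonempty ∧
    DirectedOn (fun A B => opLE E B A) D ∧
    (∀ d ∈ D, opLE E 0 d) ∧
    (∀ C : E →ₗ[ℝ] E, IsOrderBoundedOp E C → (∀ d ∈ D, opLE E C d) → opLE E C 0) ∧
    ∀ d ∈ D, ∃ i₀ : ι, ∀ i : ι, i₀ ≤ i → opLE E (L - T i) d ∧ opLE E (T i - L) d


/-- `ℓ∞(ℕ)`, realized as the bounded (automatically continuous) functions `ℕ → ℝ`. -/
abbrev LinfN := BoundedContinuousFunction ℕ ℝ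

namespace LinfN

noncomputable def single (j : ℕ) : LinfN :=
  BoundedContinuousFunction.indicator {j} (isClopen_discrete _)

theorem single_apply (j k : ℕ) : single j k = if k = j then 1 else 0 := by
  simp [single, Set.indicator_apply]

theorem le_def {x y : LinfN} : x ≤ y ↔ ∀ k, x k ≤ y k := Iff.rfl

theorem single_nonneg (j : ℕ) : 0 ≤ single j := le_def.mpr fun k => by
  rw [single_apply]; split_ifs <;> norm_num

theorem sum_single_range_le_one (m : ℕ) : ∑ j ∈ Finset.range m, single j ≤ 1 :=
  le_def.mpr fun k => by
    simp only [BoundedContinuousFunction.coe_sum, Finset.sum_apply, single_apply,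
      Finset.sum_ite_eq, BoundedContinuousFunction.coe_one, Pi.one_apply]
    split_ifs <;> norm_num

section Shift

variable {S : LinfN →ₗ[ℝ] LinfN} (hS : ∀ x : LinfN, (S x) 0 = 0 ∧ ∀ k : ℕ, (S x) (k + 1) = x k)
include hS

theorem shift_pow_apply (n : ℕ) (x : LinfN) (k : ℕ) :
    (S ^ n) x k = if n ≤ k then x (k - n) else 0 := by
  induction n generalizing k with
  | zero => simp
  | succ n ih =>
    rw [pow_succ', Module.End.mul_apply]
    cases k with
    | zero => simp [(hS _).1]
    | succ k => simp [(hS _).2, ih, Nat.add_sub_add_right]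

theorem abs_shift_pow_apply_le (n : ℕ) (x : LinfN) (k : ℕ) : |(S ^ n) x k| ≤ ‖x‖ := by
  rw [shift_pow_apply hS]
  split_ifs
  · exact x.norm_coe_le_norm _
  · simp

theorem shift_pow_nonneg (n : ℕ) {x : LinfN} (hx : 0 ≤ x) : 0 ≤ (S ^ n) x :=
  le_def.mpr fun k => by
    rw [shift_pow_apply hS]
    split_ifs
    · exact le_def.mp hx (k - n)
    · exact le_rfl

theorem shift_pow_single_apply {j k : ℕ} (hjk : j ≤ k) : (S ^ (k - j)) (single j) k = 1 := by
  rw [shift_pow_apply hS, if_pos (Nat.sub_le k j), single_apply, if_pos (by omega)]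

variable {U : LinfN →ₗ[ℝ] LinfN} (hU : ∀ n : ℕ, 1 ≤ n → opLE LinfN (S ^ n) U)
include hU

theorem map_nonneg_of_shift_pow_le {x : LinfN} (hx : 0 ≤ x) : 0 ≤ U x :=
  (shift_pow_nonneg hS 1 hx).trans (hU 1 le_rfl x hx)

theorem one_le_apply_single_of_shift_pow_le {j k : ℕ} (hjk : j < k) : 1 ≤ U (single j) k := by
  have hdom := le_def.mp (hU (k - j) (by omega) (single j) (single_nonneg j)) k
  rwa [shift_pow_single_apply hS hjk.le] at hdom

theorem natCast_le_apply_one_of_shift_pow_le (m : ℕ) : (m : ℝ) ≤ U 1 m := by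
  have hmono : U (∑ j ∈ Finset.range m, single j) ≤ U 1 := by
    rw [← sub_nonneg, ← map_sub]
    exact map_nonneg_of_shift_pow_le hS hU (sub_nonneg.mpr (sum_single_range_le_one m))
  calc (m : ℝ) = ∑ _j ∈ Finset.range m, (1 : ℝ) := by simp
    _ ≤ ∑ j ∈ Finset.range m, U (single j) m :=
      Finset.sum_le_sum fun j hj =>
        one_le_apply_single_of_shift_pow_le hS hU (Finset.mem_range.mp hj)
    _ = U (∑ j ∈ Finset.range m, single j) m := by
      rw [map_sum, BoundedContinuousFunction.coe_sum, Finset.sum_apply]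
    _ ≤ U 1 m := le_def.mp hmono m

end Shift

theorem not_shift_pow_le {S : LinfN →ₗ[ℝ] LinfN}
    (hS : ∀ x : LinfN, (S x) 0 = 0 ∧ ∀ k : ℕ, (S x) (k + 1) = x k)
    (U : LinfN →ₗ[ℝ] LinfN) : ¬ ∀ n : ℕ, 1 ≤ n → opLE LinfN (S ^ n) U := fun hU => by
  obtain ⟨m, hm⟩ := exists_nat_gt ‖U 1‖
  exact (natCast_le_apply_one_of_shift_pow_le hS hU m).trans ((U 1).apply_le_norm m) |>.not_gt hm

end LinfN

theorem stmt9 (S : LinfN →ₗ[ℝ] LinfN)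
    (hS : ∀ x : LinfN, (S x) 0 = 0 ∧ ∀ k : ℕ, (S x) (k + 1) = x k) :
    (∀ x : LinfN, ∃ c d : LinfN, ∀ n : ℕ, 1 ≤ n → c ≤ (S ^ n) x ∧ (S ^ n) x ≤ d) ∧
      ¬ ∃ U : LinfN →ₗ[ℝ] LinfN, IsOrderBoundedOp LinfN U ∧
          ∀ n : ℕ, 1 ≤ n → opLE LinfN (S ^ n) U := by
  refine ⟨fun x => ⟨.const ℕ (-‖x‖), .const ℕ ‖x‖, fun n _ => ?_⟩, ?_⟩
  · have hbound := fun k => abs_le.mp (LinfN.abs_shift_pow_apply_le hS n x k)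
    exact ⟨LinfN.le_def.mpr fun k => (hbound k).1, LinfN.le_def.mpr fun k => (hbound k).2⟩
  · rintro ⟨U, -, hU⟩
    exact LinfN.not_shift_pow_le hS U hU
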